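/- Let M be a module of the Virasoro algebra on which C acts as the scalar −2, and let v⁰, v¹ ∈ M satisfy L_{−n}·v⁰ = L_{−n}·v¹ = 0 for all n ≥ 1, L_0·v⁰ = 0 and L_0·v¹ = v⁰. Set w := 2·L_2·L_1·v¹ − L_1·L_1·L_1·v¹ − L_3·v⁰ and let J := U(𝔏)·(L_1·v⁰) be the submodule generated by L_1·v⁰. Then: (i) L_0·w − 3·w ∈ J; (ii) L_{−1}·w ∈ J and L_{−3}·w ∈ J; and (iii) L_{−2}·w = −15·(L_1·v⁰). -/

import Mathlib

/-- A representation of the Virasoro algebra on a complex vector space `V`: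
a family of operators `L n` (`n : ℤ`) and an operator `C` satisfying the Virasoro
commutation relations
`[L m, L n] = (n - m) L (m+n) + (C/12)(n³ - n) δ_{m+n,0}` and `[C, L n] = 0`. -/
structure VirasoroRep (V : Type) [AddCommGroup V] [Module ℂ V] where
  L : ℤ → Module.End ℂ V
  C : Module.End ℂ V
  comm_LL : ∀ m n : ℤ, L m * L n - L n * L m =
      ((n : ℂ) - (m : ℂ)) • L (m + n) +
        (if m + n = 0 then (((n : ℂ) ^ 3 - (n : ℂ)) / 12) else 0) • C
  comm_CL : ∀ n : ℤ, C * L n - L n * C = 0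

namespace VirasoroRep

variable {V W : Type} [AddCommGroup V] [Module ℂ V] [AddCommGroup W] [Module ℂ W]

/-- `v` is a singular vector of weight `(h, c)`: it is annihilated by all `L (-n)`, `n ≥ 1`,
and is an eigenvector of `L 0` and `C` with eigenvalues `h` resp. `c`. -/
def IsSingular (ρ : VirasoroRep V) (h c : ℂ) (v : V) : Prop :=
  (∀ n : ℤ, 1 ≤ n → ρ.L (-n) v = 0) ∧ ρ.L 0 v = h • v ∧ ρ.C v = c • v

/-- A linear subspace invariant under the Virasoro action, i.e. an `𝔏`-submodule. -/
def Invariant (ρ : VirasoroRep V) (p : Submodule ℂ V) : Prop :=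
  (∀ n : ℤ, ∀ x ∈ p, ρ.L n x ∈ p) ∧ ∀ x ∈ p, ρ.C x ∈ p

/-- The `𝔏`-submodule `U(𝔏)·v` generated by a vector `v`: the smallest invariant subspace
containing `v`. -/
def gen (ρ : VirasoroRep V) (v : V) : Submodule ℂ V :=
  sInf {p : Submodule ℂ V | ρ.Invariant p ∧ v ∈ p}

/-- The vector `v` generates the module: `U(𝔏)·v` is everything. -/
def Generates (ρ : VirasoroRep V) (v : V) : Prop :=
  ∀ p : Submodule ℂ V, ρ.Invariant p → v ∈ p → p = ⊤

/-- A homomorphism of Virasoro modules: a linear map intertwining the actions. -/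
def IsHom (ρ : VirasoroRep V) (σ : VirasoroRep W) (f : V →ₗ[ℂ] W) : Prop :=
  (∀ (n : ℤ) (x : V), f (ρ.L n x) = σ.L n (f x)) ∧ ∀ x : V, f (ρ.C x) = σ.C (f x)

end VirasoroRep

/-!
Every claim is a finite computation: commuting each `L (-k)`, `k ≥ 0`, to the right of the
raising operators with the Virasoro relations (normal ordering), the lowering operators kill
`v⁰` and `v¹`, and `L 0` acts on them by the Jordan block `v¹ ↦ v⁰ ↦ 0`. At arbitrary central
charge `c` this gives `L₋₂ w = -15 • L₁ v⁰ + (c + 2) • L₁ v¹` and `L₋₃ w = -2(c + 2) • v⁰`, so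
`c = -2` is exactly where these become multiples of `L₁ v⁰`; meanwhile `L₀ w - 3w` and `L₋₁ w`
are raising operators applied to `L₁ v⁰`, hence lie in `U(𝔏)·L₁ v⁰`.
-/

namespace VirasoroRep

variable {V : Type} [AddCommGroup V] [Module ℂ V] (ρ : VirasoroRep V)

theorem L_L_apply (m n : ℤ) (x : V) :
    ρ.L m (ρ.L n x) = ρ.L n (ρ.L m x) + ((n : ℂ) - m) • ρ.L (m + n) x +
      (if m + n = 0 then ((n : ℂ) ^ 3 - n) / 12 else 0) • ρ.C x := by
  have h := LinearMap.congr_fun (ρ.comm_LL m n) x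
  simp only [LinearMap.sub_apply, Module.End.mul_apply, LinearMap.add_apply,
    LinearMap.smul_apply] at h
  rw [add_assoc, ← h, add_sub_cancel]

theorem L_neg_L_apply (k n : ℤ) (x : V) :
    ρ.L (-k) (ρ.L n x) = ρ.L n (ρ.L (-k) x) + ((n : ℂ) + k) • ρ.L (n - k) x +
      (if n = k then ((n : ℂ) ^ 3 - n) / 12 else 0) • ρ.C x := by
  simpa [neg_add_eq_sub, sub_eq_zero, eq_comm] using ρ.L_L_apply (-k) n x

theorem L_zero_L_apply (n : ℤ) (x : V) :
    ρ.L 0 (ρ.L n x) = ρ.L n (ρ.L 0 x) + (n : ℂ) • ρ.L n x := by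
  rcases eq_or_ne n 0 with rfl | hn
  · simp
  · simpa [hn] using ρ.L_L_apply 0 n x

theorem mem_gen_self (v : V) : v ∈ ρ.gen v :=
  Submodule.mem_sInf.2 fun _ hp => hp.2

theorem L_mem_gen {v x : V} (n : ℤ) (hx : x ∈ ρ.gen v) : ρ.L n x ∈ ρ.gen v :=
  Submodule.mem_sInf.2 fun p hp => hp.1.1 n x (Submodule.mem_sInf.1 hx p hp)

def levelThreeVector (v0 v1 : V) : V :=
  (2 : ℂ) • ρ.L 2 (ρ.L 1 v1) - ρ.L 1 (ρ.L 1 (ρ.L 1 v1)) - ρ.L 3 v0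

variable {ρ} {c : ℂ} {v0 v1 : V}

theorem L_zero_levelThreeVector_sub (h0 : ρ.L 0 v0 = 0) (h1 : ρ.L 0 v1 = v0) :
    ρ.L 0 (ρ.levelThreeVector v0 v1) - (3 : ℂ) • ρ.levelThreeVector v0 v1 =
      (2 : ℂ) • ρ.L 2 (ρ.L 1 v0) - ρ.L 1 (ρ.L 1 (ρ.L 1 v0)) := by
  simp only [levelThreeVector, map_add, map_sub, map_smul, map_zero, Int.cast_one, Int.cast_ofNat,
    L_zero_L_apply, h0, h1]
  module

theorem L_neg_one_levelThreeVector (hv0 : ∀ n : ℤ, 1 ≤ n → ρ.L (-n) v0 = 0)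
    (hv1 : ∀ n : ℤ, 1 ≤ n → ρ.L (-n) v1 = 0) (h1 : ρ.L 0 v1 = v0) :
    ρ.L (-1) (ρ.levelThreeVector v0 v1) = (-6 : ℂ) • ρ.L 1 (ρ.L 1 v0) := by
  simp only [levelThreeVector, map_add, map_sub, map_smul, map_zero, Int.cast_one, Int.cast_ofNat,
    Int.reduceNeg, Int.reduceSub, Int.reduceLE, Int.reduceEq,
    ↓reduceIte, L_neg_L_apply, L_zero_L_apply, hv0, hv1, h1]
  module

theorem L_neg_two_levelThreeVector (hC : ∀ x : V, ρ.C x = c • x)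
    (hv0 : ∀ n : ℤ, 1 ≤ n → ρ.L (-n) v0 = 0) (hv1 : ∀ n : ℤ, 1 ≤ n → ρ.L (-n) v1 = 0)
    (h1 : ρ.L 0 v1 = v0) :
    ρ.L (-2) (ρ.levelThreeVector v0 v1) = (-15 : ℂ) • ρ.L 1 v0 + (c + 2) • ρ.L 1 v1 := by
  simp only [levelThreeVector, map_add, map_sub, map_smul, map_zero, Int.cast_one, Int.cast_ofNat,
    Int.reduceNeg, Int.reduceSub, Int.reduceLE, Int.reduceEq,
    ↓reduceIte, L_neg_L_apply, L_zero_L_apply, hv0, hv1, h1, hC]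
  module

theorem L_neg_three_levelThreeVector (hC : ∀ x : V, ρ.C x = c • x)
    (hv0 : ∀ n : ℤ, 1 ≤ n → ρ.L (-n) v0 = 0) (hv1 : ∀ n : ℤ, 1 ≤ n → ρ.L (-n) v1 = 0)
    (h0 : ρ.L 0 v0 = 0) (h1 : ρ.L 0 v1 = v0) :
    ρ.L (-3) (ρ.levelThreeVector v0 v1) = (-2 * (c + 2)) • v0 := by
  simp only [levelThreeVector, map_add, map_sub, map_smul, map_zero, Int.cast_one, Int.cast_ofNat,
    Int.reduceNeg, Int.reduceSub, Int.reduceLE, Int.reduceEq,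
    ↓reduceIte, L_neg_L_apply, hv0, hv1, h0, h1, hC]
  module

end VirasoroRep

/-- At central charge `c = −2` and lowest weight `0`, for lowest weight vectors `v⁰, v¹` with
`L₀ v⁰ = 0`, `L₀ v¹ = v⁰`, both annihilated by all lowering operators, the vector
`w := 2·L₂L₁v¹ − L₁³v¹ − L₃v⁰` satisfies, with `J := U(𝔏)·(L₁ v⁰)`:
(i) `L₀ w − 3w ∈ J`; (ii) `L₋₁ w ∈ J` and `L₋₃ w ∈ J`; (iii) `L₋₂ w = −15·L₁ v⁰`. -/
theorem jordan_verma_c_neg_two_level_three_singular_vector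
    (V : Type) [AddCommGroup V] [Module ℂ V] (ρ : VirasoroRep V)
    (hC : ∀ x : V, ρ.C x = (-2 : ℂ) • x)
    (v0 v1 : V)
    (hlow : ∀ n : ℤ, 1 ≤ n → ρ.L (-n) v0 = 0 ∧ ρ.L (-n) v1 = 0)
    (h0 : ρ.L 0 v0 = 0) (h1 : ρ.L 0 v1 = v0) :
    (ρ.L 0 ((2 : ℂ) • ρ.L 2 (ρ.L 1 v1) - ρ.L 1 (ρ.L 1 (ρ.L 1 v1)) - ρ.L 3 v0)
        - (3 : ℂ) • ((2 : ℂ) • ρ.L 2 (ρ.L 1 v1) - ρ.L 1 (ρ.L 1 (ρ.L 1 v1)) - ρ.L 3 v0)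
      ∈ ρ.gen (ρ.L 1 v0)) ∧
    (ρ.L (-1) ((2 : ℂ) • ρ.L 2 (ρ.L 1 v1) - ρ.L 1 (ρ.L 1 (ρ.L 1 v1)) - ρ.L 3 v0)
      ∈ ρ.gen (ρ.L 1 v0)) ∧
    (ρ.L (-3) ((2 : ℂ) • ρ.L 2 (ρ.L 1 v1) - ρ.L 1 (ρ.L 1 (ρ.L 1 v1)) - ρ.L 3 v0)
      ∈ ρ.gen (ρ.L 1 v0)) ∧
    (ρ.L (-2) ((2 : ℂ) • ρ.L 2 (ρ.L 1 v1) - ρ.L 1 (ρ.L 1 (ρ.L 1 v1)) - ρ.L 3 v0)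
      = (-15 : ℂ) • ρ.L 1 v0) := by
  have hv0 (n : ℤ) (hn : 1 ≤ n) : ρ.L (-n) v0 = 0 := (hlow n hn).1
  have hv1 (n : ℤ) (hn : 1 ≤ n) : ρ.L (-n) v1 = 0 := (hlow n hn).2
  have hJ := ρ.mem_gen_self (ρ.L 1 v0)
  simp only [← VirasoroRep.levelThreeVector.eq_1]
  refine ⟨?_, ?_, ?_, ?_⟩
  · rw [VirasoroRep.L_zero_levelThreeVector_sub h0 h1]
    exact Submodule.sub_mem _ (Submodule.smul_mem _ _ (ρ.L_mem_gen 2 hJ))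
      (ρ.L_mem_gen 1 (ρ.L_mem_gen 1 hJ))
  · rw [VirasoroRep.L_neg_one_levelThreeVector hv0 hv1 h1]
    exact Submodule.smul_mem _ _ (ρ.L_mem_gen 1 hJ)
  · rw [VirasoroRep.L_neg_three_levelThreeVector hC hv0 hv1 h0 h1]
    norm_num
  · rw [VirasoroRep.L_neg_two_levelThreeVector hC hv0 hv1 h1]
    norm_num
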